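/- arXiv:1911.07969 — 10 statements merged into one kernel-verified Lean document; each statement's English description precedes it below -/
import Mathlib

section
/- For all nonnegative reals x1, x2, x3, x4 summing to 1, we have x1*x2*x3 + x1*x2*x4 + x1*x3*x4 + x2*x3*x4 <= 1/16. -/
/-!
Pair the variables as `s = x₁ + x₂` and `t = x₃ + x₄`. The cubic form equals
`x₁x₂ t + x₃x₄ s`, and two-variable AM-GM applied first to each pair and then to `s, t`
bounds it by `s t (s + t) / 4 ≤ (s + t)³ / 16`.
-/

theorem sixteen_mul_esymm_three_le_pow_three {R : Type*} [CommRing R] [LinearOrder R]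
    [IsStrictOrderedRing R] {a b c d : R} (ha : 0 ≤ a) (hb : 0 ≤ b) (hc : 0 ≤ c) (hd : 0 ≤ d) :
    16 * (a * b * c + a * b * d + a * c * d + b * c * d) ≤ (a + b + c + d) ^ 3 := by
  set s := a + b
  set t := c + d
  have hs : 0 ≤ s := add_nonneg ha hb
  have ht : 0 ≤ t := add_nonneg hc hd
  calc 16 * (a * b * c + a * b * d + a * c * d + b * c * d)
      = 4 * ((4 * a * b) * t + (4 * c * d) * s) := by ring
    _ ≤ 4 * (s ^ 2 * t + t ^ 2 * s) := by
        gcongr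
        · exact four_mul_le_sq_add a b
        · exact four_mul_le_sq_add c d
    _ = 4 * s * t * (s + t) := by ring
    _ ≤ (s + t) ^ 2 * (s + t) := by
        gcongr
        exact four_mul_le_sq_add s t
    _ = (a + b + c + d) ^ 3 := by ring

theorem stmt_1 (x1 x2 x3 x4 : ℝ) (h1 : 0 ≤ x1) (h2 : 0 ≤ x2) (h3 : 0 ≤ x3) (h4 : 0 ≤ x4)
    (hsum : x1 + x2 + x3 + x4 = 1) :
    x1 * x2 * x3 + x1 * x2 * x4 + x1 * x3 * x4 + x2 * x3 * x4 ≤ 1 / 16 := by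
  have h := sixteen_mul_esymm_three_le_pow_three h1 h2 h3 h4
  rw [hsum, one_pow] at h
  linarith
end

section
/- Let G be the 3-graph on vertex set {1,...,6} whose edges are all 3-element subsets of {1,...,6} except {1,2,3}, {1,2,6}, {3,4,5}, {4,5,6}. Then for all nonnegative reals x1,...,x6 summing to 1, the sum over edges E of G of the product x_i*x_j*x_k (for E = {i,j,k}) is at most 2/27, with equality only if x1 = x2 = ... = x6 = 1/6. -/
/-!
Write `a, …, f` for the weights of the vertices `0, …, 5`. The four missing triples are
permuted by the swaps `0 ↔ 1`, `3 ↔ 4`, `2 ↔ 5` and `{0, 1} ↔ {3, 4}`, and with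
`a + ⋯ + f = 1` the defect `2/27 - ∑_{ijk ∈ G} x_i x_j x_k` is a sum of terms
`weight * (difference)²` measuring the failure of each of these symmetries, plus one
term forcing `c + f = 1/3`. All weights are positive at a point where every term vanishes,
so equality pins down every coordinate.
-/

/-- The 3-graph `G_6^2` on vertex set `Fin 6`: all 3-element subsets except
`{1,2,3}, {1,2,6}, {3,4,5}, {4,5,6}` (written with vertices `0,…,5`). -/
def G62 : Finset (Finset (Fin 6)) :=
  (Finset.univ.powersetCard 3).filter
    (fun E => E ∉ ({{0, 1, 2}, {0, 1, 5}, {2, 3, 4}, {3, 4, 5}} : Finset (Finset (Fin 6))))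

def g62EdgePoly (a b c d e f : ℝ) : ℝ :=
  a * b * d + a * b * e + a * c * d + a * c * e + a * c * f + a * d * e + a * d * f +
    a * e * f + b * c * d + b * c * e + b * c * f + b * d * e + b * d * f + b * e * f +
    c * d * f + c * e * f

lemma G62_eq : G62 = {{0, 1, 3}, {0, 1, 4}, {0, 2, 3}, {0, 2, 4}, {0, 2, 5}, {0, 3, 4},
    {0, 3, 5}, {0, 4, 5}, {1, 2, 3}, {1, 2, 4}, {1, 2, 5}, {1, 3, 4}, {1, 3, 5},
    {1, 4, 5}, {2, 3, 5}, {2, 4, 5}} := by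
  decide

lemma sum_G62_prod_eq (x : Fin 6 → ℝ) :
    ∑ E ∈ G62, ∏ i ∈ E, x i = g62EdgePoly (x 0) (x 1) (x 2) (x 3) (x 4) (x 5) := by
  rw [G62_eq, g62EdgePoly]
  simp +decide [Finset.sum_insert, Finset.prod_insert]
  ring

lemma defect_g62EdgePoly_eq {a b c d e f : ℝ} (hs : a + b + c + d + e + f = 1) :
    432 * (2 / 27 - g62EdgePoly a b c d e f) =
      (3 * (c + f) + 5) * (3 * (c + f) - 1) ^ 2
      + 108 * (a + b + d + e) * (c - f) ^ 2
      + 108 * (d + e) * (a - b) ^ 2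
      + 108 * (a + b) * (d - e) ^ 2
      + (108 * (c + f) + 27 * (a + b + d + e)) * (a + b - (d + e)) ^ 2 := by
  obtain rfl : f = 1 - (a + b + c + d + e) := by linarith
  rw [g62EdgePoly]
  ring

lemma eq_of_mul_sq_sub_eq_zero {w u v : ℝ} (hw : 0 < w) (h : w * (u - v) ^ 2 = 0) :
    u = v := by
  simpa [hw.ne', sub_eq_zero] using h

section

variable {a b c d e f : ℝ} (ha : 0 ≤ a) (hb : 0 ≤ b) (hc : 0 ≤ c) (hd : 0 ≤ d) (he : 0 ≤ e)
  (hf : 0 ≤ f) (hs : a + b + c + d + e + f = 1)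

include ha hb hc hd he hf hs

lemma g62EdgePoly_le : g62EdgePoly a b c d e f ≤ 2 / 27 := by
  have h := defect_g62EdgePoly_eq hs
  have : 0 ≤ 432 * (2 / 27 - g62EdgePoly a b c d e f) := by rw [h]; positivity
  linarith

lemma eq_one_div_six_of_g62EdgePoly_eq (h : g62EdgePoly a b c d e f = 2 / 27) :
    a = 1 / 6 ∧ b = 1 / 6 ∧ c = 1 / 6 ∧ d = 1 / 6 ∧ e = 1 / 6 ∧ f = 1 / 6 := by
  have h0 := defect_g62EdgePoly_eq hs
  rw [h, sub_self, mul_zero] at h0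
  have t1 : 0 ≤ (3 * (c + f) + 5) * (3 * (c + f) - 1) ^ 2 := by positivity
  have t2 : 0 ≤ 108 * (a + b + d + e) * (c - f) ^ 2 := by positivity
  have t3 : 0 ≤ 108 * (d + e) * (a - b) ^ 2 := by positivity
  have t4 : 0 ≤ 108 * (a + b) * (d - e) ^ 2 := by positivity
  have t5 : 0 ≤ (108 * (c + f) + 27 * (a + b + d + e)) * (a + b - (d + e)) ^ 2 := by
    positivity
  have hcf : 3 * (c + f) = 1 :=
    eq_of_mul_sq_sub_eq_zero (w := 3 * (c + f) + 5) (by positivity) (by linarith)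
  have hab_de : a + b = d + e :=
    eq_of_mul_sq_sub_eq_zero (w := 108 * (c + f) + 27 * (a + b + d + e)) (by linarith)
      (by linarith)
  have hc_f : c = f :=
    eq_of_mul_sq_sub_eq_zero (w := 108 * (a + b + d + e)) (by linarith) (by linarith)
  have ha_b : a = b :=
    eq_of_mul_sq_sub_eq_zero (w := 108 * (d + e)) (by linarith) (by linarith)
  have hd_e : d = e :=
    eq_of_mul_sq_sub_eq_zero (w := 108 * (a + b)) (by linarith) (by linarith)
  refine ⟨?_, ?_, ?_, ?_, ?_, ?_⟩ <;> linarith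

end

theorem stmt_2 (x : Fin 6 → ℝ) (hx : ∀ i, 0 ≤ x i) (hsum : ∑ i, x i = 1) :
    (∑ E ∈ G62, ∏ i ∈ E, x i ≤ 2 / 27) ∧
    (∑ E ∈ G62, ∏ i ∈ E, x i = 2 / 27 → ∀ i, x i = 1 / 6) := by
  have hs : x 0 + x 1 + x 2 + x 3 + x 4 + x 5 = 1 := by
    simpa [Fin.sum_univ_six] using hsum
  rw [sum_G62_prod_eq]
  refine ⟨g62EdgePoly_le (hx 0) (hx 1) (hx 2) (hx 3) (hx 4) (hx 5) hs, fun h i => ?_⟩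
  obtain ⟨h0, h1, h2, h3, h4, h5⟩ :=
    eq_one_div_six_of_g62EdgePoly_eq (hx 0) (hx 1) (hx 2) (hx 3) (hx 4) (hx 5) hs h
  fin_cases i <;> assumption
end

section
/- For nonnegative reals a, b, c with 2a + 2b + 2c = 1 and d = (b+c)/2, we have 2a^2(b+c) + 8abc + 2bc(b+c) <= 2(a+d)^2 * 2d <= 2/27. -/
/-!
Merging `b` and `c` into their mean `d` can only increase the polynomial, since `4bc ≤ (b + c)²`.
The merged value `2 (a + d)² (2d)` is then bounded by AM-GM for `a + d, a + d, 2d`, whose sum is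
`2a + 2b + 2c = 1`.
-/

section

variable {R : Type*} [CommRing R] [LinearOrder R] [IsStrictOrderedRing R]

theorem lagrangian_le_of_merge_mean {a b c d : R} (ha : 0 ≤ a) (hb : 0 ≤ b) (hc : 0 ≤ c)
    (hd : b + c = 2 * d) :
    2 * a ^ 2 * (b + c) + 8 * a * b * c + 2 * b * c * (b + c) ≤ 2 * ((a + d) ^ 2 * (2 * d)) := by
  have gap : 0 ≤ ((b + c) ^ 2 - 4 * b * c) * (4 * a + b + c) :=
    mul_nonneg (sub_nonneg.2 (four_mul_le_sq_add b c)) (by positivity)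
  have key : 2 * (2 * ((a + d) ^ 2 * (2 * d))
      - (2 * a ^ 2 * (b + c) + 8 * a * b * c + 2 * b * c * (b + c)))
      = ((b + c) ^ 2 - 4 * b * c) * (4 * a + b + c) := by
    -- the coefficient is the difference quotient of `t ↦ t (2a + t)²` between `b + c` and `2d`
    linear_combination (-((b + c) ^ 2 + (b + c) * (2 * d) + (2 * d) ^ 2
      + 4 * a * (b + c + 2 * d) + 4 * a ^ 2)) * hd
  linarith [key ▸ gap]

theorem twentySeven_mul_sq_mul_le_cube {x y : R} (hx : 0 ≤ x) (hy : 0 ≤ y) :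
    27 * (x ^ 2 * y) ≤ (2 * x + y) ^ 3 := by
  have factored : (2 * x + y) ^ 3 - 27 * (x ^ 2 * y) = (x - y) ^ 2 * (8 * x + y) := by ring
  rw [← sub_nonneg, factored]
  positivity

end

theorem stmt_3 (a b c d : ℝ) (ha : 0 ≤ a) (hb : 0 ≤ b) (hc : 0 ≤ c)
    (hsum : 2 * a + 2 * b + 2 * c = 1) (hd : d = (b + c) / 2) :
    2 * a ^ 2 * (b + c) + 8 * a * b * c + 2 * b * c * (b + c)
      ≤ 2 * ((a + d) ^ 2 * (2 * d)) ∧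
    2 * ((a + d) ^ 2 * (2 * d)) ≤ 2 / 27 := by
  have hbc : b + c = 2 * d := by linarith
  have hd0 : 0 ≤ d := by linarith
  refine ⟨lagrangian_le_of_merge_mean ha hb hc hbc, ?_⟩
  have amgm := twentySeven_mul_sq_mul_le_cube (x := a + d) (by linarith) (by linarith : 0 ≤ 2 * d)
  have hmean : 2 * (a + d) + 2 * d = 1 := by linarith
  rw [hmean, one_pow] at amgm
  linarith
end

section
/- Let T be a 3-uniform hypergraph on k >= 7 vertices such that every pair of vertices of T is contained in some edge (T is 2-covered), and such that for every set S of 7 vertices of T, the induced subhypergraph T[S] has transversal number at most 1. Then T is a star, i.e., there is a vertex v contained in every edge of T. -/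
/-!
Suppose no vertex lies in every edge. Any set of at most 7 vertices lies in a 7-set, so the edges
inside it share a vertex. Two edges span at most 6 vertices, so edges pairwise meet; hence three
edges span at most 7 vertices and always share a vertex. Take an edge `{a, b, c}` and edges
`Eₐ ∌ a`, `E_b ∌ b`, `E_c ∌ c`. The common vertex of `{a, b, c}`, `Eₐ`, `E_b` must be `c`, and
symmetrically, so each of `Eₐ`, `E_b`, `E_c` shares two vertices with `{a, b, c}`. Then the four
edges span at most 6 vertices, yet their common vertex would be a vertex of `{a, b, c}` other
than `a`, `b`, `c`.
-/

open Finset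

section

variable {V : Type*}

def IsLocallyStar (T : Finset (Finset V)) (n : ℕ) : Prop :=
  ∀ U : Finset V, #U ≤ n → ∃ x, ∀ E ∈ T, E ⊆ U → x ∈ E

theorem isLocallyStar_of_forall_card_eq [Fintype V] {T : Finset (Finset V)} {n : ℕ}
    (hV : n ≤ Fintype.card V) (hT : ∀ S : Finset V, #S = n → ∃ x, ∀ E ∈ T, E ⊆ S → x ∈ E) :
    IsLocallyStar T n := by
  intro U hU
  obtain ⟨S, hUS, hS⟩ := exists_superset_card_eq hU hV
  obtain ⟨x, hx⟩ := hT S hS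
  exact ⟨x, fun E hE hEU => hx E hE (hEU.trans hUS)⟩

theorem Finset.card_union_add_card_inter_le [DecidableEq V] {E U F : Finset V} (hEU : E ⊆ U) :
    #(U ∪ F) + #(E ∩ F) ≤ #U + #F := by
  rw [← card_union_add_card_inter U F]
  gcongr

namespace IsLocallyStar

variable [DecidableEq V] {T : Finset (Finset V)}

theorem inter_nonempty (hT : IsLocallyStar T 7) (hcard : ∀ E ∈ T, #E = 3)
    {E F : Finset V} (hE : E ∈ T) (hF : F ∈ T) : (E ∩ F).Nonempty := by
  have hEF : #(E ∪ F) ≤ 7 := by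
    have := card_union_le E F
    rw [hcard E hE, hcard F hF] at this
    omega
  obtain ⟨x, hx⟩ := hT _ hEF
  exact ⟨x, mem_inter.mpr ⟨hx E hE subset_union_left, hx F hF subset_union_right⟩⟩

theorem exists_common_mem₃ (hT : IsLocallyStar T 7) (hcard : ∀ E ∈ T, #E = 3)
    {E F G : Finset V} (hE : E ∈ T) (hF : F ∈ T) (hG : G ∈ T) :
    ∃ x ∈ E, x ∈ F ∧ x ∈ G := by
  have hEF := card_union_add_card_inter_le (F := F) (subset_refl E)
  have hEFG := card_union_add_card_inter_le (F := G) (subset_union_left : E ⊆ E ∪ F)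
  have hF₁ := (hT.inter_nonempty hcard hE hF).card_pos
  have hG₁ := (hT.inter_nonempty hcard hE hG).card_pos
  obtain ⟨x, hx⟩ := hT (E ∪ F ∪ G)
    (by simp only [hcard E hE, hcard F hF, hcard G hG] at hEF hEFG; omega)
  exact ⟨x, hx E hE (subset_union_left.trans subset_union_left),
    hx F hF (subset_union_right.trans subset_union_left), hx G hG subset_union_right⟩

theorem mem_of_notMem_of_notMem (hT : IsLocallyStar T 7) (hcard : ∀ E ∈ T, #E = 3)
    {a b c : V} {F G : Finset V} (hE : {a, b, c} ∈ T) (hF : F ∈ T) (ha : a ∉ F) (hG : G ∈ T)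
    (hb : b ∉ G) : c ∈ F ∧ c ∈ G := by
  obtain ⟨x, hx, hxF, hxG⟩ := hT.exists_common_mem₃ hcard hE hF hG
  simp only [mem_insert, mem_singleton] at hx
  rcases hx with rfl | rfl | rfl
  · exact absurd hxF ha
  · exact absurd hxG hb
  · exact ⟨hxF, hxG⟩

theorem exists_common_mem₄ (hT : IsLocallyStar T 7) (hcard : ∀ E ∈ T, #E = 3)
    {E F G H : Finset V} (hE : E ∈ T) (hF : F ∈ T) (hG : G ∈ T) (hH : H ∈ T)
    (hEF : 2 ≤ #(E ∩ F)) (hEG : 2 ≤ #(E ∩ G)) (hEH : 2 ≤ #(E ∩ H)) :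
    ∃ x ∈ E, x ∈ F ∧ x ∈ G ∧ x ∈ H := by
  have h₁ := card_union_add_card_inter_le (F := F) (subset_refl E)
  have h₂ := card_union_add_card_inter_le (F := G) (subset_union_left : E ⊆ E ∪ F)
  have h₃ := card_union_add_card_inter_le (F := H)
    (subset_union_left.trans subset_union_left : E ⊆ E ∪ F ∪ G)
  obtain ⟨x, hx⟩ := hT (E ∪ F ∪ G ∪ H)
    (by simp only [hcard E hE, hcard F hF, hcard G hG, hcard H hH] at h₁ h₂ h₃; omega)
  refine ⟨x, hx E hE ?_, hx F hF ?_, hx G hG ?_, hx H hH subset_union_right⟩ <;>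
    intro y hy <;> simp [hy]

end IsLocallyStar

end

theorem stmt_5_general {V : Type*} [Fintype V] (hV : 7 ≤ Fintype.card V)
    (T : Finset (Finset V)) (hcard : ∀ E ∈ T, E.card = 3)
    (htau : ∀ S : Finset V, S.card = 7 → ∃ x : V, ∀ E ∈ T, E ⊆ S → x ∈ E) :
    ∃ v : V, ∀ E ∈ T, v ∈ E := by
  classical
  have hT := isLocallyStar_of_forall_card_eq hV htau
  rcases T.eq_empty_or_nonempty with rfl | ⟨E, hE⟩
  · obtain ⟨v⟩ := Fintype.card_pos_iff.mp (by omega : 0 < Fintype.card V)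
    exact ⟨v, by simp⟩
  by_contra! hmiss
  obtain ⟨a, b, c, hab, hac, hbc, rfl⟩ := card_eq_three.mp (hcard E hE)
  obtain ⟨Ea, hEa, haEa⟩ := hmiss a
  obtain ⟨Eb, hEb, hbEb⟩ := hmiss b
  obtain ⟨Ec, hEc, hcEc⟩ := hmiss c
  obtain ⟨hcEa, hcEb⟩ := hT.mem_of_notMem_of_notMem hcard hE hEa haEa hEb hbEb
  obtain ⟨hbEa, hbEc⟩ := hT.mem_of_notMem_of_notMem hcard (c := b)
    (by rwa [pair_comm]) hEa haEa hEc hcEc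
  obtain ⟨haEb, haEc⟩ := hT.mem_of_notMem_of_notMem hcard (c := a)
    (by rwa [pair_comm, insert_comm]) hEb hbEb hEc hcEc
  obtain ⟨x, hx, hxa, hxb, hxc⟩ := hT.exists_common_mem₄ hcard hE hEa hEb hEc
    (one_lt_card.mpr ⟨b, by simp [hbEa], c, by simp [hcEa], hbc⟩)
    (one_lt_card.mpr ⟨a, by simp [haEb], c, by simp [hcEb], hac⟩)
    (one_lt_card.mpr ⟨a, by simp [haEc], b, by simp [hbEc], hab⟩)
  simp only [mem_insert, mem_singleton] at hx
  rcases hx with rfl | rfl | rfl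
  exacts [haEa hxa, hbEb hxb, hcEc hxc]

theorem stmt_5 {V : Type*} [Fintype V] [DecidableEq V] (hV : 7 ≤ Fintype.card V)
    (T : Finset (Finset V)) (hcard : ∀ E ∈ T, E.card = 3)
    (hcov : ∀ u v : V, u ≠ v → ∃ E ∈ T, u ∈ E ∧ v ∈ E)
    (htau : ∀ S : Finset V, S.card = 7 → ∃ x : V, ∀ E ∈ T, E ⊆ S → x ∈ E) :
    ∃ v : V, ∀ E ∈ T, v ∈ E :=
  stmt_5_general hV T hcard htau
end

section
/- Let n be a multiple of 3, fix a balanced partition [n] = V_1 ∪ V_2 ∪ V_3, and within each V_j fix a partition V_j = V_{1,j} ∪ V_{2,j} with |V_{1,j}| = m. Let G(n,m) be the 3-graph defined as the union of: triples within some V_{i,j}; triples with two vertices in V_{1,j} and one in V_{2,j}; two vertices in V_{1,j} and one in V_{j+1}; two vertices in V_{2,j} and one in V_{1,j+1}; two vertices in V_{2,j} and one in V_{j-1}; and one vertex in each of V_{1,j}, V_{2,j}, V_{j+1} (indices of V_j cyclic mod 3). Then the number of 4-element vertex sets inducing exactly 3 edges of G(n,m) (i.e., inducing a copy of K_4^{3-})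 equals (1/6) * m^2 * (n-3m) * (n-3m-3). -/
/-!
Index the six parts `V_{i,j}` by `Fin 3 × Fin 2`. Whether a triple is an edge of `G(n,m)` depends
only on its profile, the number of its vertices in each part. The triples inside a 4-set `S` are the
sets `S \ {a}`, whose profile is that of `S` minus one unit at the part of `a`; hence the number of
edges induced by `S` is a function of its profile, and checking the 126 profiles of size 4 shows
that it is 3 exactly for the profiles with one vertex in each of `V_{1,j}`, `V_{1,j+1}` and two in
`V_{2,j}`. A profile `c` is realised by `∏ₖ binom(|Vₖ|, cₖ)` vertex sets, so there are
`3 m² binom(n/3 - m, 2)` copies of `K_4^{3-}`.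
-/

open Finset Function

lemma powersetCard_eq_image_erase {α : Type*} [DecidableEq α] {S : Finset α} {k : ℕ}
    (hS : #S = k + 1) : S.powersetCard k = S.image S.erase := by
  ext T
  have hshadow :=
    (mem_shadow_iff_exists_mem_card_add_one (𝒜 := {S}) (t := T)).symm.trans mem_shadow_iff
  simp only [mem_singleton, exists_eq_left, hS] at hshadow
  simpa [mem_powersetCard, and_comm (a := T ⊆ S), eq_comm (a := k)] using hshadow

lemma card_filter_powersetCard_eq_sum_erase {α : Type*} [DecidableEq α] {S : Finset α} {k : ℕ}
    (hS : #S = k + 1) (p : Finset α → Prop) [DecidablePred p] :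
    #{T ∈ S.powersetCard k | p T} = ∑ a ∈ S, if p (S.erase a) then 1 else 0 := by
  rw [powersetCard_eq_image_erase hS, filter_image,
    card_image_of_injOn ((erase_injOn S).mono (filter_subset _ _)), card_filter]

section Profile

variable {α ι : Type*} [DecidableEq α] {P : ι → Finset α}

variable (P) in
def profile (S : Finset α) (k : ι) : ℕ := #(S ∩ P k)

lemma biUnion_inter_eq_self [Fintype ι] (hcover : ∀ a, ∃ k, a ∈ P k) (S : Finset α) :
    univ.biUnion (fun k => S ∩ P k) = S := by
  ext a
  simpa using fun _ => hcover a

lemma sum_eq_sum_profile_smul [Fintype ι] {M : Type*} [AddCommMonoid M]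
    (hP : Pairwise (Disjoint on P)) (hcover : ∀ a, ∃ k, a ∈ P k) {S : Finset α}
    {g : α → M} {f : ι → M}
    (hg : ∀ k, ∀ a ∈ S ∩ P k, g a = f k) :
    ∑ a ∈ S, g a = ∑ k, profile P S k • f k := by
  conv_lhs => rw [← biUnion_inter_eq_self hcover S]
  rw [sum_biUnion fun k _ k' _ hk => (hP hk).mono inter_subset_right inter_subset_right]
  exact sum_congr rfl fun k _ => (sum_congr rfl (hg k)).trans (sum_const _)

lemma sum_profile [Fintype ι] (hP : Pairwise (Disjoint on P)) (hcover : ∀ a, ∃ k, a ∈ P k)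
    (S : Finset α) : ∑ k, profile P S k = #S := by
  have hsum := sum_eq_sum_profile_smul hP hcover (S := S) (g := fun _ => 1) (f := fun _ => 1)
    fun _ _ _ => rfl
  simpa using hsum.symm

lemma profile_erase [DecidableEq ι] (hP : Pairwise (Disjoint on P)) {S : Finset α} {a : α}
    {k : ι} (ha : a ∈ S ∩ P k) : profile P (S.erase a) = profile P S - Pi.single k 1 := by
  ext k'
  rcases eq_or_ne k' k with rfl | hk
  · simp [profile, erase_inter, card_erase_of_mem ha]
  · have : a ∉ P k' := disjoint_left.mp (hP hk.symm) (mem_inter.mp ha).2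
    simp [profile, erase_inter, hk, this]

lemma biUnion_inter_of_subset [Fintype ι] (hP : Pairwise (Disjoint on P)) {f : ι → Finset α}
    (hf : ∀ k, f k ⊆ P k) (k : ι) : univ.biUnion f ∩ P k = f k := by
  ext a
  simp only [mem_inter, mem_biUnion, mem_univ, true_and]
  refine ⟨fun ⟨⟨k', ha⟩, hak⟩ => ?_, fun ha => ⟨⟨k, ha⟩, hf k ha⟩⟩
  obtain rfl : k' = k := by_contra fun hk => disjoint_left.mp (hP hk) (hf k' ha) hak
  exact ha

lemma card_filter_profile_eq [Fintype α] [Fintype ι] [DecidableEq ι]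
    (hP : Pairwise (Disjoint on P)) (hcover : ∀ a, ∃ k, a ∈ P k) (c : ι → ℕ) :
    #{S | profile P S = c} = ∏ k, (#(P k)).choose (c k) := by
  simp_rw [← card_powersetCard, ← Fintype.card_piFinset]
  refine card_nbij' (fun S k => S ∩ P k) (fun f => univ.biUnion f) ?_ ?_ ?_ ?_
  · intro S hS
    simp only [coe_filter, mem_univ, true_and, Set.mem_ofPred_eq] at hS
    simp only [mem_coe, Fintype.mem_piFinset, mem_powersetCard]
    exact fun k => ⟨inter_subset_right, congrFun hS k⟩
  · intro f hf
    simp only [mem_coe, Fintype.mem_piFinset, mem_powersetCard] at hf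
    simp only [coe_filter, mem_univ, true_and, Set.mem_ofPred_eq]
    exact funext fun k => by rw [profile, biUnion_inter_of_subset hP (fun k => (hf k).1), (hf k).2]
  · intro S _
    exact biUnion_inter_eq_self hcover S
  · intro f hf
    simp only [mem_coe, Fintype.mem_piFinset, mem_powersetCard] at hf
    exact funext (biUnion_inter_of_subset hP fun k => (hf k).1)

lemma pairwiseDisjoint_filter_profile_eq [Fintype α] [DecidableEq ι] [Fintype ι] {κ : Type*}
    (s : Finset κ) {c : κ → ι → ℕ} (hc : Injective c) :
    (s : Set κ).PairwiseDisjoint fun j => ({S | profile P S = c j} : Finset (Finset α)) := by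
  intro j _ j' _ hj
  simp only [onFun, disjoint_filter]
  exact fun S _ h h' => hj (hc (h.symm.trans h'))

end Profile

def IsGnmEdgeProfile (c : Fin 3 × Fin 2 → ℕ) : Prop :=
  ∃ j : Fin 3,
    (c (j, 0) = 3 ∨ c (j, 1) = 3) ∨
    (c (j, 0) = 2 ∧ c (j, 1) = 1) ∨
    (c (j, 0) = 2 ∧ c (j + 1, 0) + c (j + 1, 1) = 1) ∨
    (c (j, 1) = 2 ∧ c (j + 1, 0) = 1) ∨
    (c (j, 1) = 2 ∧ c (j - 1, 0) + c (j - 1, 1) = 1) ∨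
    (c (j, 0) = 1 ∧ c (j, 1) = 1 ∧ c (j + 1, 0) + c (j + 1, 1) = 1)

instance : DecidablePred IsGnmEdgeProfile := fun c => by unfold IsGnmEdgeProfile; infer_instance

/-- The number of edges induced by a 4-set of profile `c`: omitting one of its `c k` vertices in
part `k` leaves a triple of profile `c - Pi.single k 1` (the truncated subtraction only misbehaves
when `c k = 0`). -/
def inducedEdgeCount (c : Fin 3 × Fin 2 → ℕ) : ℕ :=
  ∑ k, c k * if IsGnmEdgeProfile (c - Pi.single k 1) then 1 else 0

def k4MinusProfile (j : Fin 3) : Fin 3 × Fin 2 → ℕ :=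
  Pi.single (j, 0) 1 + Pi.single (j + 1, 0) 1 + Pi.single (j, 1) 2

set_option maxRecDepth 10000 in
lemma inducedEdgeCount_eq_three_iff {c : Fin 3 × Fin 2 → ℕ} (hc : ∑ k, c k = 4) :
    inducedEdgeCount c = 3 ↔ ∃ j, c = k4MinusProfile j := by
  -- enumerate the profiles of size 4 as tuples indexed by `Fin 6 ≃ Fin 3 × Fin 2`
  have key : ∀ d ∈ Nat.antidiagonalTuple 6 4,
      inducedEdgeCount (d ∘ finProdFinEquiv) = 3 ↔
        ∃ j, d ∘ finProdFinEquiv = k4MinusProfile j := by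
    decide
  have hmem : c ∘ (finProdFinEquiv (m := 3) (n := 2)).symm ∈ Nat.antidiagonalTuple 6 4 := by
    rw [Nat.mem_antidiagonalTuple, ← hc]
    exact Equiv.sum_comp _ c
  simpa [Function.comp_def] using key _ hmem

lemma k4MinusProfile_injective : Injective k4MinusProfile := by decide

lemma sum_k4MinusProfile (j : Fin 3) : ∑ k, k4MinusProfile j k = 4 := by
  fin_cases j <;> decide

section Gnm

variable {α : Type*} {V1 V2 : Fin 3 → Finset α}

variable (V1 V2) in
def gnmParts (k : Fin 3 × Fin 2) : Finset α := ![V1 k.1, V2 k.1] k.2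

@[simp] lemma gnmParts_zero (j : Fin 3) : gnmParts V1 V2 (j, 0) = V1 j := rfl

@[simp] lemma gnmParts_one (j : Fin 3) : gnmParts V1 V2 (j, 1) = V2 j := rfl

lemma prod_choose_k4MinusProfile {m l : ℕ} (hV1 : ∀ j, #(V1 j) = m) (hV2 : ∀ j, #(V2 j) = l)
    (j : Fin 3) :
    ∏ k, (#(gnmParts V1 V2 k)).choose (k4MinusProfile j k) = m * m * l.choose 2 := by
  fin_cases j <;>
    simp [Fintype.prod_prod_type, Fin.prod_univ_three, k4MinusProfile, hV1, hV2, Pi.single_apply]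
    <;> ring

variable [DecidableEq α]

variable (V1 V2) in
def IsGnmEdge (E : Finset α) : Prop :=
  ∃ j : Fin 3,
    (E ⊆ V1 j ∨ E ⊆ V2 j) ∨
    ((E ∩ V1 j).card = 2 ∧ (E ∩ V2 j).card = 1) ∨
    ((E ∩ V1 j).card = 2 ∧ (E ∩ (V1 (j + 1) ∪ V2 (j + 1))).card = 1) ∨
    ((E ∩ V2 j).card = 2 ∧ (E ∩ V1 (j + 1)).card = 1) ∨
    ((E ∩ V2 j).card = 2 ∧ (E ∩ (V1 (j - 1) ∪ V2 (j - 1))).card = 1) ∨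
    ((E ∩ V1 j).card = 1 ∧ (E ∩ V2 j).card = 1 ∧
      (E ∩ (V1 (j + 1) ∪ V2 (j + 1))).card = 1)

lemma pairwise_disjoint_gnmParts (hdisj : ∀ j, Disjoint (V1 j) (V2 j))
    (hdisj2 : ∀ j j' : Fin 3, j ≠ j' → Disjoint (V1 j ∪ V2 j) (V1 j' ∪ V2 j')) :
    Pairwise (Disjoint on gnmParts V1 V2) := by
  rintro ⟨j, i⟩ ⟨j', i'⟩ hne
  have hsub : ∀ j i, gnmParts V1 V2 (j, i) ⊆ V1 j ∪ V2 j := fun j i => by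
    fin_cases i
    exacts [subset_union_left, subset_union_right]
  rcases eq_or_ne j j' with rfl | hj
  · have hi : i ≠ i' := fun h => hne (h ▸ rfl)
    fin_cases i <;> fin_cases i' <;> simp_all [onFun, disjoint_comm]
  · exact (hdisj2 j j' hj).mono (hsub j i) (hsub j' i')

lemma exists_mem_gnmParts [Fintype α]
    (hcover : (V1 0 ∪ V2 0) ∪ (V1 1 ∪ V2 1) ∪ (V1 2 ∪ V2 2) = univ) (a : α) :
    ∃ k, a ∈ gnmParts V1 V2 k := by
  have ha : a ∈ (V1 0 ∪ V2 0) ∪ (V1 1 ∪ V2 1) ∪ (V1 2 ∪ V2 2) := hcover ▸ mem_univ a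
  simp only [mem_union] at ha
  rcases ha with ((h | h) | (h | h)) | (h | h)
  exacts [⟨(0, 0), h⟩, ⟨(0, 1), h⟩, ⟨(1, 0), h⟩, ⟨(1, 1), h⟩, ⟨(2, 0), h⟩,
    ⟨(2, 1), h⟩]

lemma isGnmEdge_iff (hdisj : ∀ j, Disjoint (V1 j) (V2 j)) {E : Finset α} (hE : #E = 3) :
    IsGnmEdge V1 V2 E ↔ IsGnmEdgeProfile (profile (gnmParts V1 V2) E) := by
  have hsub : ∀ s, E ⊆ s ↔ #(E ∩ s) = 3 := fun s =>
    ⟨fun h => by rw [inter_eq_left.mpr h, hE],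
      fun h => inter_eq_left.mp (eq_of_subset_of_card_le inter_subset_left (by omega))⟩
  have hunion : ∀ j, #(E ∩ (V1 j ∪ V2 j)) = #(E ∩ V1 j) + #(E ∩ V2 j) := fun j => by
    rw [inter_union_distrib_left,
      card_union_of_disjoint ((hdisj j).mono inter_subset_right inter_subset_right)]
  simp only [IsGnmEdge, IsGnmEdgeProfile, profile, gnmParts_zero, gnmParts_one, hsub, hunion]

variable {G : Finset (Finset α)}

lemma card_induced_edges_eq_inducedEdgeCount (hdisj : ∀ j, Disjoint (V1 j) (V2 j))
    (hP : Pairwise (Disjoint on gnmParts V1 V2)) (hcover : ∀ a, ∃ k, a ∈ gnmParts V1 V2 k)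
    (hG : ∀ E, E ∈ G ↔ #E = 3 ∧ IsGnmEdge V1 V2 E) {S : Finset α} (hS : #S = 4) :
    #{T ∈ S.powersetCard 3 | T ∈ G} = inducedEdgeCount (profile (gnmParts V1 V2) S) := by
  rw [card_filter_powersetCard_eq_sum_erase hS, inducedEdgeCount]
  refine sum_eq_sum_profile_smul hP hcover fun k a ha => ?_
  have hcard : #(S.erase a) = 3 := by rw [card_erase_of_mem (mem_inter.mp ha).1, hS]
  simp only [hG, hcard, true_and, isGnmEdge_iff hdisj hcard, profile_erase hP ha]

lemma filter_card_induced_edges_eq_three [Fintype α] (hdisj : ∀ j, Disjoint (V1 j) (V2 j))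
    (hP : Pairwise (Disjoint on gnmParts V1 V2)) (hcover : ∀ a, ∃ k, a ∈ gnmParts V1 V2 k)
    (hG : ∀ E, E ∈ G ↔ #E = 3 ∧ IsGnmEdge V1 V2 E) :
    {S ∈ (univ : Finset α).powersetCard 4 | #{T ∈ S.powersetCard 3 | T ∈ G} = 3} =
      univ.biUnion fun j => {S | profile (gnmParts V1 V2) S = k4MinusProfile j} := by
  ext S
  simp only [mem_filter, mem_powersetCard, subset_univ, true_and, mem_biUnion, mem_univ]
  have key : ∀ hS : #S = 4, #{T ∈ S.powersetCard 3 | T ∈ G} = 3 ↔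
      ∃ j, profile (gnmParts V1 V2) S = k4MinusProfile j := fun hS => by
    rw [card_induced_edges_eq_inducedEdgeCount hdisj hP hcover hG hS,
      inducedEdgeCount_eq_three_iff (by rw [sum_profile hP hcover, hS])]
  refine ⟨fun ⟨hS, h⟩ => (key hS).mp h, fun ⟨j, hj⟩ => ?_⟩
  have hS : #S = 4 := by rw [← sum_profile hP hcover, hj, sum_k4MinusProfile]
  exact ⟨hS, (key hS).mpr ⟨j, hj⟩⟩

end Gnm

lemma six_mul_three_mul_choose_two {n m : ℕ} (hn3 : n % 3 = 0) (hm : 3 * m ≤ n) :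
    6 * (3 * (m * m * (n / 3 - m).choose 2)) = m ^ 2 * (n - 3 * m) * (n - 3 * m - 3) := by
  set l := n / 3 - m
  have h2 : 2 * l.choose 2 = l * (l - 1) := by
    rw [Nat.choose_two_right, Nat.mul_div_cancel' (Nat.even_mul_pred_self l).two_dvd]
  rw [show n - 3 * m - 3 = 3 * (l - 1) by omega, show n - 3 * m = 3 * l by omega,
    show m ^ 2 * (3 * l) * (3 * (l - 1)) = 9 * m ^ 2 * (l * (l - 1)) by ring, ← h2]
  ring

theorem stmt_9 (n m : ℕ) (hn3 : n % 3 = 0) (hm : 3 * m ≤ n)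
    (V1 V2 : Fin 3 → Finset (Fin n))
    (hV1 : ∀ j, (V1 j).card = m) (hV2 : ∀ j, (V2 j).card = n / 3 - m)
    (hdisj : ∀ j, Disjoint (V1 j) (V2 j))
    (hdisj2 : ∀ j j' : Fin 3, j ≠ j' → Disjoint (V1 j ∪ V2 j) (V1 j' ∪ V2 j'))
    (hcover : (V1 0 ∪ V2 0) ∪ (V1 1 ∪ V2 1) ∪ (V1 2 ∪ V2 2) = Finset.univ)
    (G : Finset (Finset (Fin n)))
    (hG : ∀ E : Finset (Fin n), E ∈ G ↔ (E.card = 3 ∧ ∃ j : Fin 3,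
      (E ⊆ V1 j ∨ E ⊆ V2 j) ∨
      ((E ∩ V1 j).card = 2 ∧ (E ∩ V2 j).card = 1) ∨
      ((E ∩ V1 j).card = 2 ∧ (E ∩ (V1 (j + 1) ∪ V2 (j + 1))).card = 1) ∨
      ((E ∩ V2 j).card = 2 ∧ (E ∩ V1 (j + 1)).card = 1) ∨
      ((E ∩ V2 j).card = 2 ∧ (E ∩ (V1 (j - 1) ∪ V2 (j - 1))).card = 1) ∨
      ((E ∩ V1 j).card = 1 ∧ (E ∩ V2 j).card = 1 ∧
        (E ∩ (V1 (j + 1) ∪ V2 (j + 1))).card = 1))) :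
    6 * ((Finset.univ.powersetCard 4).filter
        (fun S : Finset (Fin n) => ((S.powersetCard 3).filter (· ∈ G)).card = 3)).card
      = m ^ 2 * (n - 3 * m) * (n - 3 * m - 3) := by
  have hP := pairwise_disjoint_gnmParts hdisj hdisj2
  have hcov := exists_mem_gnmParts hcover
  rw [filter_card_induced_edges_eq_three hdisj hP hcov hG,
    card_biUnion (pairwiseDisjoint_filter_profile_eq _ k4MinusProfile_injective)]
  simp only [card_filter_profile_eq hP hcov, prod_choose_k4MinusProfile hV1 hV2, sum_const,
    card_univ, Fintype.card_fin, smul_eq_mul]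
  exact six_mul_three_mul_choose_two hn3 hm
end

section
/- If a 3-graph H on n vertices is semibipartite with parts A, B (every edge has one vertex in A and two in B) and |H| >= (4/9 - 10*eps^{1/2}) * binom(n,3) for sufficiently small eps > 0 and sufficiently large n, then (2/3 - 4*eps^{1/4}) * n < |B| < (2/3 + 4*eps^{1/4}) * n. -/
/-!
Each edge is determined by its vertex in `A` and its pair in `B`, so `|H| ≤ (n - b) b² / 2`
with `b = |B|`. Since `(n - b) b² = 4n³/27 - (b - 2n/3)² (b + n/3)`, an edge count close to
`(4/9) binom(n,3) ≈ 2n³/27` forces `(b - 2n/3)²` to be small compared with `n²`.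
-/

open Finset

theorem Nat.cast_choose_three {K : Type*} [Field K] [CharZero K] (a : ℕ) :
    (a.choose 3 : K) = a * (a - 1) * (a - 2) / 6 := by
  rw [Nat.cast_choose_eq_descPochhammer_div]
  simp [descPochhammer_succ_right, Nat.factorial]

theorem Finset.card_le_card_mul_choose_two_of_semibipartite {α : Type*} [DecidableEq α]
    {A B : Finset α} {H : Finset (Finset α)} (hcover : ∀ E ∈ H, E ⊆ A ∪ B)
    (hH : ∀ E ∈ H, #(E ∩ A) = 1 ∧ #(E ∩ B) = 2) :
    #H ≤ #A * (#B).choose 2 := by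
  have hinj : Set.InjOn (fun E => (E ∩ A, E ∩ B)) H := by
    intro E hE F hF hEF
    simp only [Prod.mk.injEq] at hEF
    rw [← inter_eq_left.2 (hcover E hE), ← inter_eq_left.2 (hcover F hF), inter_union_distrib_left,
      inter_union_distrib_left, hEF.1, hEF.2]
  calc #H ≤ #(A.powersetCard 1 ×ˢ B.powersetCard 2) :=
        card_le_card_of_injOn _ (fun E hE => by
          simp only [coe_product, Set.mem_prod, mem_coe, mem_powersetCard]
          exact ⟨⟨inter_subset_right, (hH E hE).1⟩, inter_subset_right, (hH E hE).2⟩) hinj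
    _ = #A * (#B).choose 2 := by simp [card_powersetCard]

theorem sq_sub_two_thirds_le_of_cubic_ge {n b δ : ℝ} (hn : 0 < n) (hb : 0 ≤ b)
    (h : (4 / 27 - δ) * n ^ 3 ≤ (n - b) * b ^ 2) : (b - 2 / 3 * n) ^ 2 ≤ 3 * δ * n ^ 2 := by
  have hid : 4 / 27 * n ^ 3 - (n - b) * b ^ 2 = (b - 2 / 3 * n) ^ 2 * (b + n / 3) := by ring
  have : (b - 2 / 3 * n) ^ 2 * n ≤ 3 * δ * n ^ 2 * n := by
    nlinarith [mul_nonneg (sq_nonneg (b - 2 / 3 * n)) hb]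
  exact le_of_mul_le_mul_right this hn

theorem sq_card_sub_two_thirds_le_of_semibipartite {α : Type*} [Fintype α] [DecidableEq α]
    {A B : Finset α} {H : Finset (Finset α)} (hAB : Disjoint A B) (hcover : A ∪ B = univ)
    (hH : ∀ E ∈ H, #(E ∩ A) = 1 ∧ #(E ∩ B) = 2) {s : ℝ} (hs : 10 * s ≤ 4 / 9)
    (hsn : 3 ≤ s * Fintype.card α)
    (hdense : (4 / 9 - 10 * s) * ((Fintype.card α).choose 3 : ℝ) ≤ #H) :
    ((#B : ℝ) - 2 / 3 * Fintype.card α) ^ 2 ≤ 11 * s * (Fintype.card α : ℝ) ^ 2 := by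
  set n : ℝ := (Fintype.card α : ℝ)
  set b : ℝ := (#B : ℝ)
  have hA : (#A : ℝ) = n - b := by
    rw [eq_sub_iff_add_eq, ← Nat.cast_add, ← card_union_of_disjoint hAB, hcover, card_univ]
  have hn : 0 < n := by
    by_contra! h
    nlinarith [(Nat.cast_nonneg _ : (0 : ℝ) ≤ Fintype.card α)]
  have hb : 0 ≤ b := Nat.cast_nonneg _
  have hbn : b ≤ n := by linarith [(Nat.cast_nonneg _ : (0 : ℝ) ≤ #A)]
  have hcount : (#H : ℝ) ≤ (n - b) * b ^ 2 / 2 := by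
    have h := card_le_card_mul_choose_two_of_semibipartite (fun E _ => hcover ▸ subset_univ E) hH
    calc (#H : ℝ) ≤ (n - b) * (b * (b - 1) / 2) := by
          rw [← hA, ← Nat.cast_choose_two]; exact_mod_cast h
      _ ≤ (n - b) * b ^ 2 / 2 := by nlinarith [mul_nonneg (sub_nonneg.2 hbn) hb]
  have hchoose : (1 - s) * n ^ 3 / 6 ≤ ((Fintype.card α).choose 3 : ℝ) := by
    rw [Nat.cast_choose_three]
    nlinarith [mul_le_mul_of_nonneg_right hsn (sq_nonneg n)]
  refine (sq_sub_two_thirds_le_of_cubic_ge (δ := 11 * s / 3) hn hb ?_).trans_eq (by ring)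
  have hs0 : 0 ≤ s := by nlinarith
  nlinarith [mul_le_mul_of_nonneg_left hchoose (by linarith : (0 : ℝ) ≤ 4 / 9 - 10 * s),
    mul_nonneg (mul_nonneg hs0 hs0) (pow_pos hn 3).le]

theorem stmt_14 : ∃ ε₀ : ℝ, 0 < ε₀ ∧ ∀ ε : ℝ, 0 < ε → ε < ε₀ →
    ∃ N : ℕ, ∀ n : ℕ, N ≤ n →
    ∀ (A B : Finset (Fin n)) (H : Finset (Finset (Fin n))),
      Disjoint A B → A ∪ B = Finset.univ →
      (∀ E ∈ H, E.card = 3 ∧ (E ∩ A).card = 1 ∧ (E ∩ B).card = 2) →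
      (4 / 9 - 10 * Real.sqrt ε) * (n.choose 3 : ℝ) ≤ (H.card : ℝ) →
      (2 / 3 - 4 * Real.sqrt (Real.sqrt ε)) * (n : ℝ) < (B.card : ℝ) ∧
      (B.card : ℝ) < (2 / 3 + 4 * Real.sqrt (Real.sqrt ε)) * (n : ℝ) := by
  refine ⟨1 / 10000, by norm_num, fun ε hε hε₀ => ?_⟩
  set s := Real.sqrt ε
  have hs : 0 < s := Real.sqrt_pos.2 hε
  have hs₀ : s < 1 / 100 := (Real.sqrt_lt' (by norm_num)).2 (by linarith)
  refine ⟨⌈3 / s⌉₊, fun n hn A B H hAB hcover hH hdense => ?_⟩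
  have hsn : 3 ≤ s * n := by
    rw [← div_le_iff₀' hs]; exact (Nat.le_ceil _).trans (by exact_mod_cast hn)
  have hn : 0 < (n : ℝ) := by nlinarith
  have key := sq_card_sub_two_thirds_le_of_semibipartite hAB hcover (fun E hE => (hH E hE).2)
    (s := s) (by linarith) (by simpa using hsn) (by simpa using hdense)
  rw [Fintype.card_fin] at key
  have hlt : ((B.card : ℝ) - 2 / 3 * n) ^ 2 < (4 * Real.sqrt s * n) ^ 2 := by
    rw [mul_pow, mul_pow, Real.sq_sqrt hs.le]
    nlinarith [mul_pos hs (pow_pos hn 2)]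
  have h := abs_lt_of_sq_lt_sq' hlt (by positivity)
  constructor <;> linarith [h.1, h.2]
end

section
/- Let y1,...,y6 be nonnegative reals summing to 1, and suppose p(y) := y3*y6*(y1+y2+y4+y5) + (y1+y2)*(y3+y6)*(y4+y5) + y1*y2*(y4+y5) + y4*y5*(y1+y2) >= 2/27 - eta for some sufficiently small eta > 0. Then |y_i - 1/6| <= 5*eta^{1/2} for every i in {1,...,6}. -/
/-!
Pair the coordinates as `a = y1 + y2`, `b = y3 + y6`, `c = y4 + y5` and put `u = y1 y2`,
`v = y3 y6`, `w = y4 y5`. For fixed `(a, b, c)` both `p` and `∑ (yᵢ - 1/6)²` are affine in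
`(u, v, w)`, which ranges over the box `[0, a²/4] × [0, b²/4] × [0, c²/4]`; so
`p + (1/25) ∑ (yᵢ - 1/6)²` is bounded by its value at a vertex of that box, a cubic in `(a, b, c)`
on the simplex. Each of these eight cubics is at most `2/27`, which gives
`∑ (yᵢ - 1/6)² ≤ 25 η` whenever `p ≥ 2/27 - η`.
-/

theorem mul_le_max_zero_mul {α : Type*} [Ring α] [LinearOrder α] [IsOrderedRing α]
    {k u M : α} (hu : 0 ≤ u) (huM : u ≤ M) :
    k * u ≤ max k 0 * M := by
  rcases le_total k 0 with hk | hk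
  · rw [max_eq_right hk, zero_mul]
    exact mul_nonpos_of_nonpos_of_nonneg hk hu
  · rw [max_eq_left hk]
    exact mul_le_mul_of_nonneg_left huM hk

/-- `109/1350 = 2/27 + 1/150`, as `∑ (yᵢ - 1/6)² = ∑ yᵢ² - 1/6` when `∑ yᵢ = 1`. -/
theorem cubic_add_max_le (a b c : ℝ) (ha : 0 ≤ a) (hb : 0 ≤ b) (hc : 0 ≤ c)
    (h : a + b + c = 1) :
    a * b * c + (a ^ 2 + b ^ 2 + c ^ 2) / 25 + max (c - 2 / 25) 0 * (a ^ 2 / 4)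
      + max (23 / 25 - b) 0 * (b ^ 2 / 4) + max (a - 2 / 25) 0 * (c ^ 2 / 4) ≤ 109 / 1350 := by
  obtain rfl : c = 1 - a - b := by linarith
  rcases max_cases (1 - a - b - 2 / 25) 0 with ⟨hu, -⟩ | ⟨hu, -⟩ <;>
  rcases max_cases (23 / 25 - b) 0 with ⟨hv, -⟩ | ⟨hv, -⟩ <;>
  rcases max_cases (a - 2 / 25) 0 with ⟨hw, -⟩ | ⟨hw, -⟩ <;>
  rw [hu, hv, hw] <;>
  linarith [mul_nonneg ha (sq_nonneg (a - b)), mul_nonneg ha (sq_nonneg (a - (1 - a - b))),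
    mul_nonneg ha (sq_nonneg (b - (1 - a - b))), mul_nonneg hb (sq_nonneg (a - b)),
    mul_nonneg hb (sq_nonneg (a - (1 - a - b))), mul_nonneg hb (sq_nonneg (b - (1 - a - b))),
    mul_nonneg hc (sq_nonneg (a - (1 - a - b))), mul_nonneg ha (sq_nonneg (1 - a - b - b / 2)),
    mul_nonneg (mul_nonneg ha ha) hb, mul_nonneg (mul_nonneg ha ha) hc,
    mul_nonneg (mul_nonneg hb hb) ha, mul_nonneg (mul_nonneg hb hb) hc,
    mul_nonneg (mul_nonneg hc hc) ha]

theorem weight_add_sum_sq_le (y1 y2 y3 y4 y5 y6 : ℝ) (h1 : 0 ≤ y1) (h2 : 0 ≤ y2)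
    (h3 : 0 ≤ y3) (h4 : 0 ≤ y4) (h5 : 0 ≤ y5) (h6 : 0 ≤ y6)
    (hs : y1 + y2 + y3 + y4 + y5 + y6 = 1) :
    y3 * y6 * (y1 + y2 + y4 + y5) + (y1 + y2) * (y3 + y6) * (y4 + y5)
        + y1 * y2 * (y4 + y5) + y4 * y5 * (y1 + y2)
      + ((y1 - 1 / 6) ^ 2 + (y2 - 1 / 6) ^ 2 + (y3 - 1 / 6) ^ 2 + (y4 - 1 / 6) ^ 2
        + (y5 - 1 / 6) ^ 2 + (y6 - 1 / 6) ^ 2) / 25 ≤ 2 / 27 := by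
  have hu := mul_le_max_zero_mul (k := y4 + y5 - 2 / 25) (mul_nonneg h1 h2)
    (by linarith [four_mul_le_sq_add y1 y2] : y1 * y2 ≤ (y1 + y2) ^ 2 / 4)
  have hv := mul_le_max_zero_mul (k := 23 / 25 - (y3 + y6)) (mul_nonneg h3 h6)
    (by linarith [four_mul_le_sq_add y3 y6] : y3 * y6 ≤ (y3 + y6) ^ 2 / 4)
  have hw := mul_le_max_zero_mul (k := y1 + y2 - 2 / 25) (mul_nonneg h4 h5)
    (by linarith [four_mul_le_sq_add y4 y5] : y4 * y5 ≤ (y4 + y5) ^ 2 / 4)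
  have hcubic := cubic_add_max_le (y1 + y2) (y3 + y6) (y4 + y5)
    (by positivity) (by positivity) (by positivity) (by linarith)
  obtain rfl : y6 = 1 - y1 - y2 - y3 - y4 - y5 := by linarith
  linarith

theorem stmt_15 : ∃ η₀ : ℝ, 0 < η₀ ∧ ∀ η : ℝ, 0 < η → η < η₀ →
    ∀ y1 y2 y3 y4 y5 y6 : ℝ,
      0 ≤ y1 → 0 ≤ y2 → 0 ≤ y3 → 0 ≤ y4 → 0 ≤ y5 → 0 ≤ y6 →
      y1 + y2 + y3 + y4 + y5 + y6 = 1 →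
      2 / 27 - η ≤ y3 * y6 * (y1 + y2 + y4 + y5) + (y1 + y2) * (y3 + y6) * (y4 + y5)
        + y1 * y2 * (y4 + y5) + y4 * y5 * (y1 + y2) →
      |y1 - 1 / 6| ≤ 5 * Real.sqrt η ∧ |y2 - 1 / 6| ≤ 5 * Real.sqrt η ∧
      |y3 - 1 / 6| ≤ 5 * Real.sqrt η ∧ |y4 - 1 / 6| ≤ 5 * Real.sqrt η ∧
      |y5 - 1 / 6| ≤ 5 * Real.sqrt η ∧ |y6 - 1 / 6| ≤ 5 * Real.sqrt η := by
  refine ⟨1, one_pos, fun η _ _ y1 y2 y3 y4 y5 y6 h1 h2 h3 h4 h5 h6 hs hp => ?_⟩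
  have hsum := weight_add_sum_sq_le y1 y2 y3 y4 y5 y6 h1 h2 h3 h4 h5 h6 hs
  have hsqrt : Real.sqrt (25 * η) = 5 * Real.sqrt η := by
    rw [Real.sqrt_mul (by norm_num), show (25 : ℝ) = 5 * 5 by norm_num,
      Real.sqrt_mul_self (by norm_num)]
  have of_sq_le (x : ℝ) (hx : x ^ 2 ≤ 25 * η) : |x| ≤ 5 * Real.sqrt η :=
    hsqrt ▸ Real.abs_le_sqrt hx
  refine ⟨of_sq_le _ ?_, of_sq_le _ ?_, of_sq_le _ ?_, of_sq_le _ ?_, of_sq_le _ ?_,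
    of_sq_le _ ?_⟩ <;>
  linarith [sq_nonneg (y1 - 1 / 6), sq_nonneg (y2 - 1 / 6), sq_nonneg (y3 - 1 / 6),
    sq_nonneg (y4 - 1 / 6), sq_nonneg (y5 - 1 / 6), sq_nonneg (y6 - 1 / 6)]
end

section
/- Let a, d be nonnegative reals with 2a + 4d = 1 and (a+d)^2 * 2d >= 1/27 - eta/2 for some eta >= 0. Then (a - 1/6)^2 <= 8 * (eta/2), i.e., |a - 1/6| <= 2*eta^{1/2}. -/
/-!
On the line `2a + 4d = 1` the deficit `1/27 - (a + d)² · 2d` of the Lagrangian from its maximum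
factors as `(a - 1/6)² (a/4 + 5/24)`, and the second factor is at least `1/8` once `a ≥ 0`.
-/

lemma lagrangian_deficit_eq {a d : ℝ} (hsum : 2 * a + 4 * d = 1) :
    1 / 27 - (a + d) ^ 2 * (2 * d) = (a - 1 / 6) ^ 2 * (a / 4 + 5 / 24) := by
  obtain rfl : d = (1 - 2 * a) / 4 := by linarith
  ring

lemma sq_sub_le_of_lagrangian_deficit_le {a d ε : ℝ} (ha : 0 ≤ a) (hsum : 2 * a + 4 * d = 1)
    (h : 1 / 27 - ε ≤ (a + d) ^ 2 * (2 * d)) :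
    (a - 1 / 6) ^ 2 ≤ 8 * ε := by
  have hdeficit := lagrangian_deficit_eq hsum
  nlinarith [sq_nonneg (a - 1 / 6)]

lemma abs_le_two_mul_sqrt_of_sq_le {x η : ℝ} (h : x ^ 2 ≤ 4 * η) : |x| ≤ 2 * Real.sqrt η := by
  calc |x| ≤ Real.sqrt (2 ^ 2 * η) := Real.abs_le_sqrt (by linarith)
    _ = 2 * Real.sqrt η := by rw [Real.sqrt_mul (by positivity), Real.sqrt_sq zero_le_two]

theorem stmt_16_general (a d η : ℝ) (ha : 0 ≤ a)
    (hsum : 2 * a + 4 * d = 1) (h : 1 / 27 - η / 2 ≤ (a + d) ^ 2 * (2 * d)) :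
    (a - 1 / 6) ^ 2 ≤ 8 * (η / 2) ∧ |a - 1 / 6| ≤ 2 * Real.sqrt η := by
  have hsq := sq_sub_le_of_lagrangian_deficit_le ha hsum h
  exact ⟨hsq, abs_le_two_mul_sqrt_of_sq_le (by linarith)⟩

theorem stmt_16 (a d η : ℝ) (ha : 0 ≤ a) (hd : 0 ≤ d) (hη : 0 ≤ η)
    (hsum : 2 * a + 4 * d = 1) (h : 1 / 27 - η / 2 ≤ (a + d) ^ 2 * (2 * d)) :
    (a - 1 / 6) ^ 2 ≤ 8 * (η / 2) ∧ |a - 1 / 6| ≤ 2 * Real.sqrt η :=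
  stmt_16_general a d η ha hsum h
end

section
/- Let r >= 2 and let H be an r-graph in which every two non-adjacent vertices have equal links (i.e., there is no pair of non-adjacent non-equivalent vertices). Let T be a set of vertices containing exactly one vertex from each equivalence class (where u ~ v iff u, v are non-adjacent and L(u) = L(v)). Then the induced subhypergraph H[T] is 2-covered (every pair of vertices of T is contained in an edge of H[T]) and H is a blowup of H[T]. -/
/-!
Choosing for every vertex `v` its representative `g v ∈ T` gives an idempotent map `g : V → V`
with `g v = v` or `g v` non-adjacent to `v`. For a non-adjacent pair `u ≠ v`, equal links mean
that replacing `u` by `v` in an edge containing `u` yields an edge, and conversely. Moving the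
vertices of `E` to their representatives one at a time turns `E` into `E.image g` without changing
membership in `H`, as long as no two vertices of `E` merge; this is the blowup statement. Two
distinct vertices of `T` are adjacent (else each would represent the other), and the image
under `g` of an edge through them is an edge of `H[T]` through them.
-/

namespace Finset

variable {V : Type*} [DecidableEq V]

theorem image_insert_erase_of_idem {g : V → V} (hg : ∀ v, g (g v) = g v) {E : Finset V} {w : V}
    (hw : w ∈ E) : (insert (g w) (E.erase w)).image g = E.image g := by
  rw [image_insert, hg, ← image_insert, insert_erase hw]

theorem card_filter_ne_insert_erase_lt {g : V → V} (hg : ∀ v, g (g v) = g v) {E : Finset V}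
    {w : V} (hw : w ∈ E) (hne : g w ≠ w) :
    #{x ∈ insert (g w) (E.erase w) | g x ≠ x} < #{x ∈ E | g x ≠ x} := by
  rw [filter_insert, if_neg (by simp [hg]), filter_erase]
  exact card_erase_lt_of_mem (mem_filter.2 ⟨hw, hne⟩)

theorem induction_on_moved_points {g : V → V} (hg : ∀ v, g (g v) = g v) {P : Finset V → Prop}
    (fixed : ∀ E : Finset V, (∀ w ∈ E, g w = w) → P E)
    (replace : ∀ (E : Finset V) (w : V), w ∈ E → g w ≠ w → P (insert (g w) (E.erase w)) → P E)
    (E : Finset V) : P E := by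
  induction h : #{x ∈ E | g x ≠ x} using Nat.strong_induction_on generalizing E with
  | _ n ih =>
    by_cases hmoved : ∃ w ∈ E, g w ≠ w
    · obtain ⟨w, hw, hne⟩ := hmoved
      exact replace E w hw hne <| ih _ (h ▸ card_filter_ne_insert_erase_lt hg hw hne) _ rfl
    · push Not at hmoved
      exact fixed E hmoved

end Finset

namespace Hypergraph

open Finset

variable {V : Type*}

def Adjacent (H : Finset (Finset V)) (u v : V) : Prop := ∃ E ∈ H, u ∈ E ∧ v ∈ E

theorem Adjacent.symm {H : Finset (Finset V)} {u v : V} (h : Adjacent H u v) : Adjacent H v u :=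
  let ⟨E, hE, hu, hv⟩ := h
  ⟨E, hE, hv, hu⟩

variable [DecidableEq V]

/-- `insert u A ∈ H` with `u ∉ A` says that `A` lies in the link of `u`. -/
def NonadjacentHaveEqualLinks (H : Finset (Finset V)) : Prop :=
  ∀ u v : V, u ≠ v → ¬ Adjacent H u v →
    ∀ A : Finset V, (u ∉ A ∧ insert u A ∈ H) ↔ (v ∉ A ∧ insert v A ∈ H)

variable {H : Finset (Finset V)}

theorem insert_erase_mem_of_not_adjacent (hH : NonadjacentHaveEqualLinks H) {u v : V}
    (huv : u ≠ v) (hadj : ¬ Adjacent H u v) {E : Finset V} (hE : E ∈ H) (hu : u ∈ E) :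
    insert v (E.erase u) ∈ H :=
  ((hH u v huv hadj (E.erase u)).1 ⟨notMem_erase u E, by rwa [insert_erase hu]⟩).2

variable {g : V → V}

theorem image_mem_of_mem (hg : ∀ v, g (g v) = g v)
    (hgv : ∀ v, g v = v ∨ ¬ Adjacent H (g v) v) (hH : NonadjacentHaveEqualLinks H) {E : Finset V}
    (hE : E ∈ H) : E.image g ∈ H := by
  induction E using induction_on_moved_points hg with
  | fixed E hfix => rwa [image_congr (g := id) hfix, image_id]
  | replace E w hw hne ih =>
    have hadj : ¬ Adjacent H w (g w) := fun h => (hgv w).resolve_left hne h.symm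
    rw [← image_insert_erase_of_idem hg hw]
    exact ih (insert_erase_mem_of_not_adjacent hH hne.symm hadj hE hw)

theorem mem_of_image_mem (hg : ∀ v, g (g v) = g v)
    (hgv : ∀ v, g v = v ∨ ¬ Adjacent H (g v) v) (hH : NonadjacentHaveEqualLinks H) {E : Finset V}
    (hinj : #(E.image g) = #E) (hE : E.image g ∈ H) : E ∈ H := by
  induction E using induction_on_moved_points hg with
  | fixed E hfix => rwa [image_congr (g := id) hfix, image_id] at hE
  | replace E w hw hne ih =>
    have hgwE : g w ∉ E := fun h => hne (card_image_iff.1 hinj h hw (hg w))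
    have hgwE' : g w ∉ E.erase w := fun h => hgwE (mem_of_mem_erase h)
    have hcard : #(insert (g w) (E.erase w)) = #E := by
      rw [card_insert_of_notMem hgwE', card_erase_add_one hw]
    rw [← image_insert_erase_of_idem hg hw] at hinj hE
    have hE' := ih (hinj.trans hcard.symm) hE
    have hadj : ¬ Adjacent H (g w) w := (hgv w).resolve_left hne
    simpa [erase_insert hgwE', insert_erase hw] using
      insert_erase_mem_of_not_adjacent hH hne hadj hE' (mem_insert_self _ _)

end Hypergraph

open Finset Hypergraph in
theorem stmt_17_general {V : Type*} [DecidableEq V] (r : ℕ)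
    (H : Finset (Finset V)) (hcard : ∀ E ∈ H, E.card = r)
    (heq : ∀ u v : V, u ≠ v → (¬ ∃ E ∈ H, u ∈ E ∧ v ∈ E) →
      ∀ A : Finset V, (u ∉ A ∧ insert u A ∈ H) ↔ (v ∉ A ∧ insert v A ∈ H))
    (T : Finset V)
    (hT : ∀ v : V, ∃! t : V, t ∈ T ∧ (t = v ∨ ¬ ∃ E ∈ H, t ∈ E ∧ v ∈ E)) :
    (∀ u ∈ T, ∀ v ∈ T, u ≠ v → ∃ E ∈ H, E ⊆ T ∧ u ∈ E ∧ v ∈ E) ∧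
    (∃ g : V → V, (∀ v : V, g v ∈ T ∧ (g v = v ∨ ¬ ∃ E ∈ H, g v ∈ E ∧ v ∈ E)) ∧
      ∀ E : Finset V, E ∈ H ↔
        (E.card = r ∧ (E.image g).card = r ∧ E.image g ∈ H)) := by
  choose g hgT hgv using fun v => (hT v).exists
  have hfix : ∀ t ∈ T, g t = t := fun t ht => (hT t).unique ⟨hgT t, hgv t⟩ ⟨ht, Or.inl rfl⟩
  have hg : ∀ v, g (g v) = g v := fun v => hfix _ (hgT v)
  refine ⟨fun u hu v hv huv => ?_, g, fun v => ⟨hgT v, hgv v⟩, fun E => ⟨fun hE => ?_, ?_⟩⟩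
  · have hadj : Adjacent H u v := by
      by_contra hadj
      exact huv <| (hT v).unique ⟨hu, Or.inr hadj⟩ ⟨hv, Or.inl rfl⟩
    obtain ⟨E, hE, huE, hvE⟩ := hadj
    refine ⟨E.image g, image_mem_of_mem hg hgv heq hE, fun x hx => ?_,
      mem_image.2 ⟨u, huE, hfix u hu⟩, mem_image.2 ⟨v, hvE, hfix v hv⟩⟩
    obtain ⟨y, -, rfl⟩ := mem_image.1 hx
    exact hgT y
  · have hE' := image_mem_of_mem hg hgv heq hE
    exact ⟨hcard E hE, hcard _ hE', hE'⟩
  · rintro ⟨hE, hE', hmem⟩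
    exact mem_of_image_mem hg hgv heq (hE'.trans hE.symm) hmem

theorem stmt_17 {V : Type*} [Fintype V] [DecidableEq V] (r : ℕ) (hr : 2 ≤ r)
    (H : Finset (Finset V)) (hcard : ∀ E ∈ H, E.card = r)
    (heq : ∀ u v : V, u ≠ v → (¬ ∃ E ∈ H, u ∈ E ∧ v ∈ E) →
      ∀ A : Finset V, (u ∉ A ∧ insert u A ∈ H) ↔ (v ∉ A ∧ insert v A ∈ H))
    (T : Finset V)
    (hT : ∀ v : V, ∃! t : V, t ∈ T ∧ (t = v ∨ ¬ ∃ E ∈ H, t ∈ E ∧ v ∈ E)) :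
    (∀ u ∈ T, ∀ v ∈ T, u ≠ v → ∃ E ∈ H, E ⊆ T ∧ u ∈ E ∧ v ∈ E) ∧
    (∃ g : V → V, (∀ v : V, g v ∈ T ∧ (g v = v ∨ ¬ ∃ E ∈ H, g v ∈ E ∧ v ∈ E)) ∧
      ∀ E : Finset V, E ∈ H ↔
        (E.card = r ∧ (E.image g).card = r ∧ E.image g ∈ H)) :=
  stmt_17_general r H hcard heq T hT
end

section
/- Any intersecting 2-covered 3-graph T on at least 5 vertices in which every two edges intersect in exactly two vertices, containing edges E1 = {u,v,w1} and E2 = {u,v,w2} with w1 ≠ w2, and containing an edge avoiding u and an edge avoiding v, must contain the edges {v,w1,w2} and {u,w1,w2}, and then the four edges E1, E2, {v,w1,w2}, {u,w1,w2} span 4 vertices and have transversal number 2. -/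
/-!
If `x ∉ F` and `F` meets `{x, y, a}` in two vertices, then `F ⊇ {y, a}`; likewise
`F ⊇ {y, b}`. So an edge avoiding `u` must be `{v, w₁, w₂}` and one avoiding `v` must be
`{u, w₁, w₂}`. The four edges on `{u, v, w₁, w₂}` are then all triples of a 4-set, which no
single vertex meets but `{u, w₁}` does.
-/

namespace Finset

variable {V : Type*} [DecidableEq V]

lemma ne_of_card_eq_three {a b c : V} (h : #{a, b, c} = 3) : a ≠ b ∧ a ≠ c ∧ b ≠ c := by
  refine ⟨?_, ?_, ?_⟩ <;> rintro rfl <;> grind [card_le_two]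

lemma erase_subset_of_card_inter_add_one {F A : Finset V} {x : V} (hxA : x ∈ A) (hxF : x ∉ F)
    (hA : #(F ∩ A) + 1 = #A) : A.erase x ⊆ F := by
  have hsub : F ∩ A ⊆ A.erase x := fun z hz =>
    mem_erase.2 ⟨fun h => hxF (h ▸ (mem_inter.1 hz).1), (mem_inter.1 hz).2⟩
  have heq : F ∩ A = A.erase x :=
    eq_of_subset_of_card_le hsub (by rw [card_erase_of_mem hxA]; omega)
  exact heq ▸ inter_subset_left

lemma mem_of_subset_singleton_of_inter_nonempty {S E : Finset V} {a : V} (hS : S ⊆ {a})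
    (hE : (E ∩ S).Nonempty) : a ∈ E := by
  obtain ⟨z, hz⟩ := hE
  rw [mem_inter] at hz
  exact mem_singleton.1 (hS hz.2) ▸ hz.1

end Finset

open Finset

lemma edge_eq_of_notMem {V : Type*} [DecidableEq V] {T : Finset (Finset V)}
    (hcard : ∀ E ∈ T, #E = 3)
    (hint2 : ∀ E1 ∈ T, ∀ E2 ∈ T, E1 ≠ E2 → #(E1 ∩ E2) = 2)
    {x y a b : V} (hab : a ≠ b) (hA : {x, y, a} ∈ T) (hB : {x, y, b} ∈ T)
    {F : Finset V} (hF : F ∈ T) (hxF : x ∉ F) : F = {y, a, b} := by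
  have hsub : ∀ c, {x, y, c} ∈ T → {y, c} ⊆ F := fun c hC => by
    obtain ⟨hxy, hxc, -⟩ := ne_of_card_eq_three (hcard _ hC)
    have hne : F ≠ {x, y, c} := by rintro rfl; simp at hxF
    have h := erase_subset_of_card_inter_add_one (mem_insert_self x _) hxF
      (by rw [hint2 F hF _ hC hne, hcard _ hC])
    rwa [erase_insert (by simp [hxy, hxc])] at h
  obtain ⟨-, -, hya⟩ := ne_of_card_eq_three (hcard _ hA)
  obtain ⟨-, -, hyb⟩ := ne_of_card_eq_three (hcard _ hB)
  refine (eq_of_subset_of_card_le ?_ ?_).symm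
  · simp only [insert_subset_iff, singleton_subset_iff] at hsub ⊢
    exact ⟨(hsub a hA).1, (hsub a hA).2, (hsub b hB).2⟩
  · rw [hcard F hF, card_eq_three.2 ⟨y, a, b, hya, hyb, hab, rfl⟩]

theorem stmt_18_general {V : Type*} [DecidableEq V]
    (T : Finset (Finset V)) (hcard : ∀ E ∈ T, E.card = 3)
    (hint2 : ∀ E1 ∈ T, ∀ E2 ∈ T, E1 ≠ E2 → (E1 ∩ E2).card = 2)
    (u v w1 w2 : V) (hw : w1 ≠ w2)
    (hE1 : ({u, v, w1} : Finset V) ∈ T) (hE2 : ({u, v, w2} : Finset V) ∈ T)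
    (hu : ∃ E ∈ T, u ∉ E) (hv : ∃ E ∈ T, v ∉ E) :
    ({v, w1, w2} : Finset V) ∈ T ∧ ({u, w1, w2} : Finset V) ∈ T ∧
    ({u, v, w1, w2} : Finset V).card = 4 ∧
    (∃ S : Finset V, S.card = 2 ∧
      ∀ E ∈ ({{u, v, w1}, {u, v, w2}, {v, w1, w2}, {u, w1, w2}} : Finset (Finset V)),
        (E ∩ S).Nonempty) ∧
    ¬ ∃ S : Finset V, S.card ≤ 1 ∧
      ∀ E ∈ ({{u, v, w1}, {u, v, w2}, {v, w1, w2}, {u, w1, w2}} : Finset (Finset V)),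
        (E ∩ S).Nonempty := by
  obtain ⟨huv, huw1, hvw1⟩ := ne_of_card_eq_three (hcard _ hE1)
  obtain ⟨-, huw2, hvw2⟩ := ne_of_card_eq_three (hcard _ hE2)
  obtain ⟨Fu, hFu, huFu⟩ := hu
  obtain ⟨Fv, hFv, hvFv⟩ := hv
  have hvw : {v, w1, w2} ∈ T := edge_eq_of_notMem hcard hint2 hw hE1 hE2 hFu huFu ▸ hFu
  have huw : {u, w1, w2} ∈ T := edge_eq_of_notMem hcard hint2 hw
    (insert_comm u v {w1} ▸ hE1) (insert_comm u v {w2} ▸ hE2) hFv hvFv ▸ hFv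
  refine ⟨hvw, huw, ?_, ⟨{u, w1}, card_pair huw1, ?_⟩, ?_⟩
  · rw [card_insert_of_notMem (by simp [huv, huw1, huw2]), hcard _ hvw]
  · simp only [mem_insert, mem_singleton, forall_eq_or_imp, forall_eq]
    exact ⟨⟨u, by simp⟩, ⟨u, by simp⟩, ⟨w1, by simp⟩, ⟨u, by simp⟩⟩
  · rintro ⟨S, hS, hmeet⟩
    have : Nonempty V := ⟨u⟩
    obtain ⟨a, haS⟩ := card_le_one_iff_subset_singleton.1 hS
    have ha := fun E hE => mem_of_subset_singleton_of_inter_nonempty haS (hmeet E hE)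
    simp only [mem_insert, mem_singleton, forall_eq_or_imp, forall_eq] at ha
    grind

theorem stmt_18 {V : Type*} [Fintype V] [DecidableEq V] (hV : 5 ≤ Fintype.card V)
    (T : Finset (Finset V)) (hcard : ∀ E ∈ T, E.card = 3)
    (hcov : ∀ u v : V, u ≠ v → ∃ E ∈ T, u ∈ E ∧ v ∈ E)
    (hintersecting : ∀ E1 ∈ T, ∀ E2 ∈ T, (E1 ∩ E2).Nonempty)
    (hint2 : ∀ E1 ∈ T, ∀ E2 ∈ T, E1 ≠ E2 → (E1 ∩ E2).card = 2)
    (u v w1 w2 : V) (hw : w1 ≠ w2)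
    (hE1 : ({u, v, w1} : Finset V) ∈ T) (hE2 : ({u, v, w2} : Finset V) ∈ T)
    (hu : ∃ E ∈ T, u ∉ E) (hv : ∃ E ∈ T, v ∉ E) :
    ({v, w1, w2} : Finset V) ∈ T ∧ ({u, w1, w2} : Finset V) ∈ T ∧
    ({u, v, w1, w2} : Finset V).card = 4 ∧
    (∃ S : Finset V, S.card = 2 ∧
      ∀ E ∈ ({{u, v, w1}, {u, v, w2}, {v, w1, w2}, {u, w1, w2}} : Finset (Finset V)),
        (E ∩ S).Nonempty) ∧
    ¬ ∃ S : Finset V, S.card ≤ 1 ∧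
      ∀ E ∈ ({{u, v, w1}, {u, v, w2}, {v, w1, w2}, {u, w1, w2}} : Finset (Finset V)),
        (E ∩ S).Nonempty :=
  stmt_18_general T hcard hint2 u v w1 w2 hw hE1 hE2 hu hv
end
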